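/- Let B, R, N, M be positive integers, X ∈ ℝ^{B×N} and G ∈ ℝ^{B×M} fixed matrices with rows x_i ∈ ℝ^N and g_j ∈ ℝ^M respectively, h : Fin B → Fin R a fixed function, and (s b)_b a Rademacher family. Let S be the random count-sketch matrix with S_{r,b} = s(b)·[h(b) = r]. Then the mean squared Frobenius error of the sketched estimator equals E[ ‖(S·X)ᵀ·(S·G) − Xᵀ·G‖_F² ] = Σ over ordered pairs (i, j) with i ≠ j and h(i) = h(j) of ( ‖x_i‖² · ‖g_j‖² + ⟨x_i, x_j⟩ · ⟨g_i, g_j⟩ ). -/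

import Mathlib

open MeasureTheory ProbabilityTheory Matrix

/-- The count-sketch matrix associated to a hash function `h : Fin B → Fin R` and a sign
assignment `s : Fin B → ℝ`: the entry at `(r, b)` is `s b` if `h b = r` and `0` otherwise. -/
noncomputable def countSketch {B R : ℕ} (h : Fin B → Fin R) (s : Fin B → ℝ) :
    Matrix (Fin R) (Fin B) ℝ :=
  Matrix.of fun r b => if h b = r then s b else 0

/-!
Write the Gram matrix of the count sketch as `SᵀS = 1 + D`, where `D i j = s i * s j` on colliding
pairs (`i ≠ j`, `h i = h j`) and `0` elsewhere (this uses `s i ^ 2 = 1`). The error is then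
`Xᵀ D G`, whose squared Frobenius norm is `∑_{p,q} D_p D_q ⟨x_{p.1}, x_{q.1}⟩ ⟨g_{p.2}, g_{q.2}⟩`.
Products of Rademacher signs over finite sets are orthonormal, `E[(∏_S s)(∏_T s)] = [S = T]`,
because the product equals `∏_{S ∆ T} s` and independent signs have mean zero. So in expectation
only the terms with `q = p` or `q = p.swap` survive.
-/

theorem Finset.prod_mul_prod_eq_prod_symmDiff {ι M : Type*} [DecidableEq ι] [CommMonoid M]
    {f : ι → M} (hf : ∀ i, f i * f i = 1) (s t : Finset ι) :
    (∏ i ∈ s, f i) * ∏ i ∈ t, f i = ∏ i ∈ symmDiff s t, f i := by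
  rw [Finset.symmDiff_def, prod_union disjoint_sdiff_sdiff, ← prod_inter_mul_prod_sdiff s t,
    ← prod_inter_mul_prod_sdiff t s, inter_comm t s]
  have hinter : (∏ i ∈ s ∩ t, f i) * ∏ i ∈ s ∩ t, f i = 1 := by
    rw [← prod_mul_distrib]; exact prod_eq_one fun i _ => hf i
  calc _ = ((∏ i ∈ s ∩ t, f i) * ∏ i ∈ s ∩ t, f i) *
        ((∏ i ∈ s \ t, f i) * ∏ i ∈ t \ s, f i) := by ac_rfl
    _ = _ := by rw [hinter, one_mul]

theorem Finset.sum_ite_eq_or_eq {α M : Type*} [DecidableEq α] [AddCommMonoid M] {s : Finset α}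
    {a b : α} (ha : a ∈ s) (hb : b ∈ s) (hab : a ≠ b) (f : α → M) :
    ∑ x ∈ s, (if x = a ∨ x = b then f x else 0) = f a + f b := by
  rw [← sum_filter, filter_or, filter_eq', filter_eq', if_pos ha, if_pos hb,
    ← insert_eq, sum_pair hab]

section Rademacher

variable {Ω ι : Type*} [MeasurableSpace Ω] {μ : Measure Ω}

theorem integral_eq_zero_of_eq_one_or_eq_neg_one [IsProbabilityMeasure μ] {X : Ω → ℝ}
    (hX : Measurable X) (hval : ∀ ω, X ω = 1 ∨ X ω = -1) (hhalf : μ {ω | X ω = 1} = 1 / 2) :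
    ∫ ω, X ω ∂μ = 0 := by
  set A := {ω | X ω = 1}
  have hA : MeasurableSet A := hX (measurableSet_singleton 1)
  have hXA : ∀ ω, X ω = 2 * A.indicator 1 ω - 1 := fun ω => by
    rcases hval ω with h | h <;> norm_num [A, Set.indicator, h]
  simp_rw [hXA]
  rw [integral_sub (((integrable_const 1).indicator hA).const_mul 2) (integrable_const 1),
    integral_const_mul, integral_indicator_one hA, measureReal_def, hhalf]
  simp

theorem integral_finset_prod_eq_zero_of_nonempty {X : ι → Ω → ℝ} (hX : ∀ i, Measurable (X i))
    (hval : ∀ i ω, X i ω = 1 ∨ X i ω = -1) (hhalf : ∀ i, μ {ω | X i ω = 1} = 1 / 2)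
    (hindep : iIndepFun X μ) {S : Finset ι} (hS : S.Nonempty) :
    ∫ ω, ∏ i ∈ S, X i ω ∂μ = 0 := by
  classical
  have := hindep.isProbabilityMeasure
  obtain ⟨a, ha⟩ := hS
  have hsplit := (hindep.indepFun_finsetProd_of_notMem hX
    (S.notMem_erase a)).integral_fun_mul_eq_mul_integral (by fun_prop) (hX a).aestronglyMeasurable
  simp only [Finset.prod_apply] at hsplit
  simp_rw [← S.prod_erase_mul _ ha, hsplit,
    integral_eq_zero_of_eq_one_or_eq_neg_one (hX a) (hval a) (hhalf a), mul_zero]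

theorem integral_finset_prod_mul_finset_prod [DecidableEq ι] {X : ι → Ω → ℝ}
    (hX : ∀ i, Measurable (X i)) (hval : ∀ i ω, X i ω = 1 ∨ X i ω = -1)
    (hhalf : ∀ i, μ {ω | X i ω = 1} = 1 / 2) (hindep : iIndepFun X μ) (S T : Finset ι) :
    ∫ ω, (∏ i ∈ S, X i ω) * ∏ i ∈ T, X i ω ∂μ = if S = T then 1 else 0 := by
  have := hindep.isProbabilityMeasure
  simp_rw [Finset.prod_mul_prod_eq_prod_symmDiff fun i => mul_self_eq_one_iff.2 (hval i _)]
  split_ifs with hST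
  · simp [hST]
  · exact integral_finset_prod_eq_zero_of_nonempty hX hval hhalf hindep
      (Finset.symmDiff_nonempty.2 hST)

theorem integral_mul_mul_mul_of_ne [DecidableEq ι] {X : ι → Ω → ℝ}
    (hX : ∀ i, Measurable (X i)) (hval : ∀ i ω, X i ω = 1 ∨ X i ω = -1)
    (hhalf : ∀ i, μ {ω | X i ω = 1} = 1 / 2) (hindep : iIndepFun X μ) {p q : ι × ι}
    (hp : p.1 ≠ p.2) (hq : q.1 ≠ q.2) :
    ∫ ω, X p.1 ω * X p.2 ω * (X q.1 ω * X q.2 ω) ∂μ = if q = p ∨ q = p.swap then 1 else 0 := by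
  have hpair {r : ι × ι} (hr : r.1 ≠ r.2) (ω : Ω) :
      X r.1 ω * X r.2 ω = ∏ i ∈ {r.1, r.2}, X i ω :=
    (Finset.prod_pair (f := (X · ω)) hr).symm
  simp_rw [hpair hp, hpair hq, integral_finset_prod_mul_finset_prod hX hval hhalf hindep,
    ← Finset.coe_inj, Finset.coe_pair, Set.pair_eq_pair_iff, Prod.ext_iff, Prod.fst_swap,
    Prod.snd_swap]
  exact if_congr (by tauto) rfl rfl

theorem integrable_mul_mul_mul_of_eq_one_or_eq_neg_one [IsFiniteMeasure μ] {X : ι → Ω → ℝ}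
    (hX : ∀ i, Measurable (X i)) (hval : ∀ i ω, X i ω = 1 ∨ X i ω = -1) (i j k l : ι) :
    Integrable (fun ω => X i ω * X j ω * (X k ω * X l ω)) μ := by
  refine .of_bound (by fun_prop) 1 (ae_of_all _ fun ω => le_of_eq ?_)
  simp [fun i => (abs_eq zero_le_one).2 (hval i ω)]

theorem integral_sum_sum_mul_mul_mul_mul [DecidableEq ι] {X : ι → Ω → ℝ}
    (hX : ∀ i, Measurable (X i)) (hval : ∀ i ω, X i ω = 1 ∨ X i ω = -1)
    (hhalf : ∀ i, μ {ω | X i ω = 1} = 1 / 2) (hindep : iIndepFun X μ) {C : Finset (ι × ι)}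
    (hC : ∀ p ∈ C, p.1 ≠ p.2 ∧ p.swap ∈ C) (K : ι × ι → ι × ι → ℝ) :
    ∫ ω, ∑ p ∈ C, ∑ q ∈ C, X p.1 ω * X p.2 ω * (X q.1 ω * X q.2 ω) * K p q ∂μ =
      ∑ p ∈ C, (K p p + K p p.swap) := by
  have := hindep.isProbabilityMeasure
  have hint (p q : ι × ι) :
      Integrable (fun ω => X p.1 ω * X p.2 ω * (X q.1 ω * X q.2 ω) * K p q) μ :=
    (integrable_mul_mul_mul_of_eq_one_or_eq_neg_one hX hval _ _ _ _).mul_const _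
  rw [integral_finsetSum _ fun p _ => integrable_finsetSum _ fun q _ => hint p q]
  refine Finset.sum_congr rfl fun p hp => ?_
  rw [integral_finsetSum _ fun q _ => hint p q]
  have hswap : p.swap ≠ p := fun h => (hC p hp).1 (congrArg Prod.fst h).symm
  calc ∑ q ∈ C, ∫ ω, X p.1 ω * X p.2 ω * (X q.1 ω * X q.2 ω) * K p q ∂μ
      = ∑ q ∈ C, if q = p ∨ q = p.swap then K p q else 0 :=
        Finset.sum_congr rfl fun q hq => by
          rw [integral_mul_const, integral_mul_mul_mul_of_ne hX hval hhalf hindep (hC p hp).1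
            (hC q hq).1, ite_mul, one_mul, zero_mul]
    _ = K p p + K p p.swap := Finset.sum_ite_eq_or_eq hp (hC p hp).2 hswap.symm _

end Rademacher

theorem Matrix.transpose_mul_mul_sub_transpose_mul {l m n k R : Type*} [Fintype l] [Fintype m]
    [DecidableEq m] [CommRing R] (S : Matrix l m R) (X : Matrix m n R) (G : Matrix m k R) :
    (S * X)ᵀ * (S * G) - Xᵀ * G = Xᵀ * (Sᵀ * S - 1) * G := by
  rw [transpose_mul, Matrix.mul_sub, Matrix.sub_mul, Matrix.mul_one, Matrix.mul_assoc,
    Matrix.mul_assoc, Matrix.mul_assoc]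

theorem Matrix.transpose_mul_mul_apply {m n k R : Type*} [Fintype m] [CommSemiring R]
    (X : Matrix m n R) (D : Matrix m m R) (G : Matrix m k R) (a : n) (c : k) :
    (Xᵀ * D * G) a c = ∑ p : m × m, D p.1 p.2 * (X p.1 a * G p.2 c) := by
  simp only [mul_apply, transpose_apply, Finset.sum_mul, Fintype.sum_prod_type]
  rw [Finset.sum_comm]
  exact Finset.sum_congr rfl fun _ _ => Finset.sum_congr rfl fun _ _ => by ring

theorem sum_sum_sq_sum_mul_mul {α m n : Type*} [Fintype m] [Fintype n] (C : Finset α)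
    (w : α → ℝ) (u : α → m → ℝ) (v : α → n → ℝ) :
    ∑ a, ∑ c, (∑ p ∈ C, w p * (u p a * v p c)) ^ 2 =
      ∑ p ∈ C, ∑ q ∈ C, w p * w q * ((u p ⬝ᵥ u q) * (v p ⬝ᵥ v q)) := by
  have hsq (a : m) (c : n) : (∑ p ∈ C, w p * (u p a * v p c)) ^ 2 =
      ∑ p ∈ C, ∑ q ∈ C, w p * w q * (u p a * u q a * (v p c * v q c)) := by
    rw [sq, Finset.sum_mul_sum]
    exact Finset.sum_congr rfl fun p _ => Finset.sum_congr rfl fun q _ => by ring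
  have hdot (p q : α) : w p * w q * ((u p ⬝ᵥ u q) * (v p ⬝ᵥ v q)) =
      ∑ a, ∑ c, w p * w q * (u p a * u q a * (v p c * v q c)) := by
    simp_rw [dotProduct, Finset.sum_mul_sum, Finset.mul_sum]
  simp_rw [hsq, hdot]
  rw [Finset.sum_comm_cycle]
  exact Finset.sum_congr rfl fun p _ => Finset.sum_comm_cycle

def collisions {ι κ : Type*} [Fintype ι] [DecidableEq ι] [DecidableEq κ] (h : ι → κ) :
    Finset (ι × ι) :=
  {p | p.1 ≠ p.2 ∧ h p.1 = h p.2}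

@[simp]
theorem mem_collisions {ι κ : Type*} [Fintype ι] [DecidableEq ι] [DecidableEq κ] {h : ι → κ}
    {p : ι × ι} : p ∈ collisions h ↔ p.1 ≠ p.2 ∧ h p.1 = h p.2 := by
  simp [collisions]

@[simp]
theorem swap_mem_collisions {ι κ : Type*} [Fintype ι] [DecidableEq ι] [DecidableEq κ]
    {h : ι → κ} {p : ι × ι} : p.swap ∈ collisions h ↔ p ∈ collisions h := by
  simp [eq_comm]

section countSketch

variable {B R : ℕ} (h : Fin B → Fin R) {σ : Fin B → ℝ}

theorem countSketch_transpose_mul_self_apply (i j : Fin B) :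
    ((countSketch h σ)ᵀ * countSketch h σ) i j = if h i = h j then σ i * σ j else 0 := by
  simp [countSketch, mul_apply, ite_mul, mul_ite, Finset.sum_ite_eq]

theorem countSketch_transpose_mul_self_sub_one_apply (hσ : ∀ b, σ b * σ b = 1) (i j : Fin B) :
    ((countSketch h σ)ᵀ * countSketch h σ - 1 : Matrix (Fin B) (Fin B) ℝ) i j =
      if (i, j) ∈ collisions h then σ i * σ j else 0 := by
  rw [Matrix.sub_apply, countSketch_transpose_mul_self_apply, one_apply]
  by_cases hij : i = j
  · subst hij; simp [hσ]
  · simp [hij]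

theorem countSketch_error_apply (hσ : ∀ b, σ b * σ b = 1) {N M : ℕ}
    (X : Matrix (Fin B) (Fin N) ℝ) (G : Matrix (Fin B) (Fin M) ℝ) (a : Fin N) (c : Fin M) :
    ((countSketch h σ * X)ᵀ * (countSketch h σ * G) - Xᵀ * G) a c =
      ∑ p ∈ collisions h, σ p.1 * σ p.2 * (X p.1 a * G p.2 c) := by
  rw [transpose_mul_mul_sub_transpose_mul, transpose_mul_mul_apply]
  simp_rw [countSketch_transpose_mul_self_sub_one_apply h hσ, ite_mul, zero_mul]
  rw [Finset.sum_ite_mem, Finset.univ_inter]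

end countSketch

theorem countSketch_gradient_estimator_mse_general
    (B R N M : ℕ)
    (X : Matrix (Fin B) (Fin N) ℝ) (G : Matrix (Fin B) (Fin M) ℝ)
    (h : Fin B → Fin R)
    {Ω : Type*} [MeasureSpace Ω]
    (s : Fin B → Ω → ℝ)
    (hmeas : ∀ b, Measurable (s b))
    (hval : ∀ b ω, s b ω = 1 ∨ s b ω = -1)
    (hunif : ∀ b, (ℙ : Measure Ω) {ω | s b ω = 1} = 1 / 2)
    (hindep : iIndepFun s ℙ) :
    ∫ ω, (∑ n : Fin N, ∑ m : Fin M,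
        (((countSketch h (fun b => s b ω) * X)ᵀ * (countSketch h (fun b => s b ω) * G) -
            Xᵀ * G) n m) ^ 2) ∂ℙ =
      ∑ i : Fin B, ∑ j : Fin B,
        (if i ≠ j ∧ h i = h j then
          (X i ⬝ᵥ X i) * (G j ⬝ᵥ G j) + (X i ⬝ᵥ X j) * (G i ⬝ᵥ G j)
        else 0) := by
  simp_rw [fun ω => countSketch_error_apply h (fun b => mul_self_eq_one_iff.2 (hval b ω)) X G,
    sum_sum_sq_sum_mul_mul]
  rw [integral_sum_sum_mul_mul_mul_mul hmeas hval hunif hindep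
    fun p hp => ⟨(mem_collisions.1 hp).1, swap_mem_collisions.2 hp⟩]
  rw [collisions, Finset.sum_filter, Fintype.sum_prod_type]
  refine Finset.sum_congr rfl fun i _ => Finset.sum_congr rfl fun j _ => ?_
  split_ifs
  · dsimp only [Prod.swap_prod_mk]
    rw [dotProduct_comm (G j) (G i)]
  · rfl

/-- the mean squared Frobenius error of the sketched estimator
`(S·X)ᵀ·(S·G)` of `Xᵀ·G` equals the sum, over ordered colliding pairs `(i, j)` with `i ≠ j`
and `h i = h j`, of `‖x_i‖²·‖g_j‖² + ⟨x_i, x_j⟩·⟨g_i, g_j⟩`, where `x_i` is the `i`-th row of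
`X` and `g_j` the `j`-th row of `G`. (The squared Frobenius norm is written as the sum of the
squares of the entries, and Euclidean inner products of rows as dot products.) -/
theorem countSketch_gradient_estimator_mse
    (B R N M : ℕ) (hB : 0 < B) (hR : 0 < R) (hN : 0 < N) (hM : 0 < M)
    (X : Matrix (Fin B) (Fin N) ℝ) (G : Matrix (Fin B) (Fin M) ℝ)
    (h : Fin B → Fin R)
    {Ω : Type*} [MeasureSpace Ω] [IsProbabilityMeasure (ℙ : Measure Ω)]
    (s : Fin B → Ω → ℝ)
    (hmeas : ∀ b, Measurable (s b))
    (hval : ∀ b ω, s b ω = 1 ∨ s b ω = -1)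
    (hunif : ∀ b, (ℙ : Measure Ω) {ω | s b ω = 1} = 1 / 2)
    (hindep : iIndepFun s ℙ) :
    ∫ ω, (∑ n : Fin N, ∑ m : Fin M,
        (((countSketch h (fun b => s b ω) * X)ᵀ * (countSketch h (fun b => s b ω) * G) -
            Xᵀ * G) n m) ^ 2) ∂ℙ =
      ∑ i : Fin B, ∑ j : Fin B,
        (if i ≠ j ∧ h i = h j then
          (X i ⬝ᵥ X i) * (G j ⬝ᵥ G j) + (X i ⬝ᵥ X j) * (G i ⬝ᵥ G j)
        else 0) :=
  countSketch_gradient_estimator_mse_general B R N M X G h s hmeas hval hunif hindep
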